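/- For every positive integer k, there are at most finitely many integers r such that the complete graphic matroid M(K_{r+1}) is a rank-(≤k) perturbation (over GF(2)) of a cographic matroid. -/

import Mathlib

open Matroid Set

namespace TemplatePaper

variable {α β γ : Type*}

/-- Matroid isomorphism. -/
def MIso (M : Matroid α) (N : Matroid β) : Prop :=
  ∃ f : α → β, Set.BijOn f M.E N.E ∧ ∀ I ⊆ M.E, (M.Indep I ↔ N.Indep (f '' I))

/-- `N` is the contraction `M ／ K`. -/
def IsContraction (N M : Matroid α) (K : Set α) : Prop :=
  N.E = M.E \ K ∧
    ∀ I : Set α, N.Indep I ↔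
      (I ⊆ M.E \ K ∧ ∃ J, M.IsBasis J (K ∩ M.E) ∧ M.Indep (I ∪ J))

/-- `N` is a minor of `M` (obtained by a contraction followed by a deletion). -/
def MinorOf (N M : Matroid α) : Prop :=
  ∃ (N₁ : Matroid α) (K D : Set α), IsContraction N₁ M K ∧ N = N₁ ↾ (N₁.E \ D)

/-- `M` has a minor isomorphic to `P`. -/
def HasIsoMinor (M : Matroid α) (P : Matroid β) : Prop :=
  ∃ N : Matroid α, MinorOf N M ∧ MIso P N

/-- A simple matroid: every subset of the ground set with at most two elements
is independent. -/
def IsSimple (M : Matroid α) : Prop :=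
  ∀ I ⊆ M.E, I.ncard ≤ 2 → M.Indep I

/-- The rank of a set in a matroid (as a natural number; intended for finite matroids). -/
noncomputable def rkOf (M : Matroid α) (X : Set α) : ℕ :=
  sSup {n | ∃ I, I ⊆ X ∧ M.Indep I ∧ I.ncard = n}

/-- The rank of a matroid. -/
noncomputable def rk (M : Matroid α) : ℕ := rkOf M M.E

/-- A matroid is vertically `k`-connected if for every partition `(X, Y)` of the ground
set with `r(X) + r(Y) - r(M) < k - 1`, either `X` or `Y` is spanning. -/
def VertConn (M : Matroid α) (k : ℕ) : Prop :=
  ∀ X Y : Set α, X ∪ Y = M.E → Disjoint X Y →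
    (rkOf M X : ℤ) + (rkOf M Y : ℤ) - (rk M : ℤ) < (k : ℤ) - 1 →
    M.Spanning X ∨ M.Spanning Y

/-- `M` is represented (on its ground set) by the matrix `A` over `F`:
independence in `M` coincides with linear independence of the corresponding columns. -/
def IsRepBy (F : Type*) [Field F] (M : Matroid α) (A : β → α → F) : Prop :=
  ∀ I ⊆ M.E, (M.Indep I ↔ LinearIndependent F (fun e : I => fun b => A b (e : α)))

/-- A binary matroid: a matroid representable over `GF(2)`. -/
def IsBinary (M : Matroid α) : Prop :=
  ∃ (m : ℕ) (A : Fin m → α → ZMod 2), IsRepBy (ZMod 2) M A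

/-- A graphic matroid: the cycle matroid of a graph.  Equivalently (as is standard for
binary matroids, and as used in the paper), a matroid representable over `GF(2)` by a
matrix in which every column has at most two nonzero entries. -/
def IsGraphic (M : Matroid α) : Prop :=
  ∃ (m : ℕ) (A : Fin m → α → ZMod 2),
    IsRepBy (ZMod 2) M A ∧ ∀ e ∈ M.E, {i | A i e ≠ 0}.ncard ≤ 2

/-- A cographic matroid: the dual of a graphic matroid. -/
def IsCographic (M : Matroid α) : Prop := IsGraphic M✶

/-- `G` is (isomorphic to) the binary projective geometry `PG(m-1, 2)`:
its ground set is in bijection with the nonzero vectors of `GF(2)^m`, with independence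
given by linear independence. -/
def IsPG (m : ℕ) (G : Matroid γ) : Prop :=
  ∃ f : γ → (Fin m → ZMod 2),
    Set.BijOn f G.E {v | v ≠ 0} ∧
    ∀ I ⊆ G.E, (G.Indep I ↔ LinearIndependent (ZMod 2) (fun e : I => f (e : γ)))

/-- The set of sizes of simple rank-`≤ r` matroids in a class `𝓜`; the growth rate
function of `𝓜` at `r` is the greatest element of this set. -/
def sizesOfRank (𝓜 : Set (Matroid ℕ)) (r : ℕ) : Set ℕ :=
  {n | ∃ M ∈ 𝓜, M.E.Finite ∧ IsSimple M ∧ rk M ≤ r ∧ M.E.ncard = n}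

/-- The growth rate function of `𝓜` agrees with `f` for all but finitely many `r`. -/
def GrowthRateEventually (𝓜 : Set (Matroid ℕ)) (f : ℕ → ℕ) : Prop :=
  ∃ N : ℕ, ∀ r ≥ N, IsGreatest (sizesOfRank 𝓜 r) (f r)

/-- A minor-closed class of matroids (closed under minors and isomorphism). -/
def MinorClosed (𝓜 : Set (Matroid ℕ)) : Prop :=
  (∀ M ∈ 𝓜, ∀ N : Matroid ℕ, MinorOf N M → N ∈ 𝓜) ∧
  (∀ M ∈ 𝓜, ∀ N : Matroid ℕ, MIso N M → N ∈ 𝓜)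

/-- The class of binary matroids with no minor isomorphic to `P`. -/
def EX (P : Matroid β) : Set (Matroid ℕ) :=
  {M | M.E.Finite ∧ IsBinary M ∧ ¬HasIsoMinor M P}

/-- The subgroup of `F^ℕ` of all vectors supported on the finite set `S`
(used to encode subgroups of `F^S` for varying index sets `S`). -/
def fullOn (F : Type*) [Field F] (S : Finset ℕ) : AddSubgroup (ℕ → F) where
  carrier := {v | ∀ i ∉ S, v i = 0}
  add_mem' := by
    intro a b ha hb i hi
    simp [Pi.add_apply, ha i hi, hb i hi]
  zero_mem' := by intro i _; rfl
  neg_mem' := by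
    intro a ha i hi
    simp [Pi.neg_apply, ha i hi]

/-- Restriction of a vector to the coordinates in `S` (zero elsewhere); used to encode
the projection of a subgroup of `F^T` into `F^S`. -/
def maskOn {F : Type*} [Field F] (S : Finset ℕ) (v : ℕ → F) : ℕ → F :=
  fun i => if i ∈ S then v i else 0

/-- A frame template over `F`.  The disjoint finite sets `C, X, Y₀, Y₁` are encoded as
disjoint finite subsets of `ℕ`; the matrix `A₁ ∈ F^{X × (C ∪ Y₀ ∪ Y₁)}` is encoded as a
function `ℕ → ℕ → F` supported on `X × (C ∪ Y₀ ∪ Y₁)`; the subgroups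
`Λ ≤ F^X` and `Δ ≤ F^{C ∪ Y₀ ∪ Y₁}` are encoded as subgroups of `F^ℕ` of vectors
supported on the relevant sets, closed under scaling by elements of `Γ`. -/
structure FrameTemplate (F : Type) [Field F] where
  Γ : Subgroup Fˣ
  C : Finset ℕ
  X : Finset ℕ
  Y0 : Finset ℕ
  Y1 : Finset ℕ
  disj : List.Pairwise Disjoint [C, X, Y0, Y1]
  A1 : ℕ → ℕ → F
  A1_supp : ∀ i j, A1 i j ≠ 0 → i ∈ X ∧ j ∈ C ∪ Y0 ∪ Y1
  Δ : AddSubgroup (ℕ → F)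
  Δ_supp : ∀ v ∈ Δ, ∀ j ∉ C ∪ Y0 ∪ Y1, v j = 0
  Δ_smul : ∀ γ ∈ Γ, ∀ v ∈ Δ, (γ : F) • v ∈ Δ
  Λ : AddSubgroup (ℕ → F)
  Λ_supp : ∀ v ∈ Λ, ∀ i ∉ X, v i = 0
  Λ_smul : ∀ γ ∈ Γ, ∀ v ∈ Λ, (γ : F) • v ∈ Λ

namespace FrameTemplate

variable {F : Type} [Field F]

/-- The column index set `C ∪ Y₀ ∪ Y₁` of `A₁`. -/
def CY (Φ : FrameTemplate F) : Finset ℕ := Φ.C ∪ Φ.Y0 ∪ Φ.Y1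

end FrameTemplate

section Columns

variable {F : Type} [Field F]

/-- A column that is zero on the rows in `S`. -/
def IsZeroColOn (S : Set ℕ) (v : ℕ → F) : Prop := ∀ b ∈ S, v b = 0

/-- A unit column on the rows in `S`. -/
def IsUnitColOn (S : Set ℕ) (v : ℕ → F) : Prop :=
  ∃ b ∈ S, v b = 1 ∧ ∀ b' ∈ S, b' ≠ b → v b' = 0

/-- A column of a `Γ`-frame matrix (restricted to the rows in `S`): at most two nonzero
entries, a nonzero column contains a `1`, and a second nonzero entry equals `-γ` for
some `γ ∈ Γ`. -/
def IsFrameColOn (Γ : Subgroup Fˣ) (S : Set ℕ) (v : ℕ → F) : Prop :=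
  IsZeroColOn S v ∨ IsUnitColOn S v ∨
    ∃ b₁ ∈ S, ∃ b₂ ∈ S, b₁ ≠ b₂ ∧ v b₁ = 1 ∧ (∃ γ ∈ Γ, v b₂ = -(γ : F)) ∧
      ∀ b ∈ S, b ≠ b₁ → b ≠ b₂ → v b = 0

end Columns

namespace FrameTemplate

variable {F : Type} [Field F]

/-- A matrix `A'` (with row set `B` and column set `E`, encoded as a function `ℕ → ℕ → F`
supported on `B × E`) respects the template `Φ`, with `Z ⊆ E` as the distinguished set of
columns, and with the columns of `A'[B - X, Z]` required to satisfy `zcol`.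
Taking `zcol` to be "unit column" gives `Respects`; allowing zero columns as well gives
`VRespects` (virtually respects). -/
def RespectsWith (zcol : Set ℕ → (ℕ → F) → Prop) (Φ : FrameTemplate F)
    (B E Z : Finset ℕ) (A' : ℕ → ℕ → F) : Prop :=
  Φ.X ⊆ B ∧ Φ.CY ⊆ E ∧ Z ⊆ E ∧ Disjoint Z Φ.CY ∧
  (∀ i j, A' i j ≠ 0 → i ∈ B ∧ j ∈ E) ∧
  (∀ i ∈ Φ.X, ∀ j ∈ Φ.CY, A' i j = Φ.A1 i j) ∧
  (∀ i ∈ Φ.X, ∀ j ∈ Z, A' i j = 0) ∧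
  (∀ j ∈ Z, zcol (↑B \ ↑Φ.X : Set ℕ) (fun i => A' i j)) ∧
  (∀ j ∈ E, j ∉ Φ.CY → j ∉ Z →
    IsFrameColOn Φ.Γ (↑B \ ↑Φ.X : Set ℕ) (fun i => A' i j)) ∧
  (∀ j ∈ E, j ∉ Φ.CY → j ∉ Z → maskOn Φ.X (fun i => A' i j) ∈ Φ.Λ) ∧
  (∀ i ∈ B, i ∉ Φ.X → maskOn Φ.CY (fun j => A' i j) ∈ Φ.Δ)

/-- `A'` respects `Φ`. -/
def Respects (Φ : FrameTemplate F) (B E Z : Finset ℕ) (A' : ℕ → ℕ → F) : Prop :=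
  RespectsWith (fun S v => IsUnitColOn S v) Φ B E Z A'

/-- `A'` virtually respects `Φ` (columns of `A'[B - X, Z]` may be unit or zero). -/
def VRespects (Φ : FrameTemplate F) (B E Z : Finset ℕ) (A' : ℕ → ℕ → F) : Prop :=
  RespectsWith (fun S v => IsZeroColOn S v ∨ IsUnitColOn S v) Φ B E Z A'

/-- `A` is constructed from `A'`: they agree outside the `Z`-columns, and each
`Z`-column of `A` is the corresponding column of `A'` plus some `Y₁`-column of `A'`. -/
def BuiltFrom (Φ : FrameTemplate F) (Z : Finset ℕ) (A' A : ℕ → ℕ → F) : Prop :=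
  (∀ j ∉ Z, ∀ i, A i j = A' i j) ∧
  (∀ j ∈ Z, ∃ y ∈ Φ.Y1, ∀ i, A i j = A' i j + A' i y)

end FrameTemplate

/-- `N` is the column (vector) matroid of the matrix `A` (rows indexed by `β`),
with ground set `E`. -/
def IsColMatroidOf {β : Type*} {F : Type} [Field F] (N : Matroid ℕ) (E : Finset ℕ)
    (A : β → ℕ → F) : Prop :=
  N.E = ↑E ∧ ∀ I : Set ℕ,
    (N.Indep I ↔ I ⊆ ↑E ∧ LinearIndependent F (fun e : I => fun i => A i (e : ℕ)))

namespace FrameTemplate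

variable {F : Type} [Field F]

/-- `M` conforms to `Φ` (with the respecting condition given by `resp`): `M` is isomorphic
to `M(A) ／ C ＼ Y₁` for a matrix `A` built from a matrix `A'` satisfying `resp`. -/
def ConformsWith (resp : FrameTemplate F → Finset ℕ → Finset ℕ → Finset ℕ →
      (ℕ → ℕ → F) → Prop) (M : Matroid α) (Φ : FrameTemplate F) : Prop :=
  ∃ (B E Z : Finset ℕ) (A' A : ℕ → ℕ → F) (N N₁ : Matroid ℕ),
    resp Φ B E Z A' ∧ Φ.BuiltFrom Z A' A ∧ IsColMatroidOf N E A ∧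
    IsContraction N₁ N ↑Φ.C ∧ MIso M (N₁ ↾ (N₁.E \ ↑Φ.Y1))

/-- `M` conforms to `Φ`. -/
def Conforms (M : Matroid α) (Φ : FrameTemplate F) : Prop :=
  ConformsWith (fun Φ B E Z A' => Φ.Respects B E Z A') M Φ

/-- `M` virtually conforms to `Φ`. -/
def VConforms (M : Matroid α) (Φ : FrameTemplate F) : Prop :=
  ConformsWith (fun Φ B E Z A' => Φ.VRespects B E Z A') M Φ

end FrameTemplate

namespace FrameTemplate

variable {F : Type} [Field F]

/-- Operation (1): replace `Γ` with a proper subgroup. -/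
def Op1 (Φ Φ' : FrameTemplate F) : Prop :=
  Φ'.Γ < Φ.Γ ∧ Φ'.C = Φ.C ∧ Φ'.X = Φ.X ∧ Φ'.Y0 = Φ.Y0 ∧ Φ'.Y1 = Φ.Y1 ∧
    Φ'.A1 = Φ.A1 ∧ Φ'.Δ = Φ.Δ ∧ Φ'.Λ = Φ.Λ

/-- Operation (2): replace `Λ` with a proper subgroup (closed under scaling by `Γ`). -/
def Op2 (Φ Φ' : FrameTemplate F) : Prop :=
  Φ'.Γ = Φ.Γ ∧ Φ'.C = Φ.C ∧ Φ'.X = Φ.X ∧ Φ'.Y0 = Φ.Y0 ∧ Φ'.Y1 = Φ.Y1 ∧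
    Φ'.A1 = Φ.A1 ∧ Φ'.Δ = Φ.Δ ∧ Φ'.Λ < Φ.Λ

/-- Operation (3): replace `Δ` with a proper subgroup (closed under scaling by `Γ`). -/
def Op3 (Φ Φ' : FrameTemplate F) : Prop :=
  Φ'.Γ = Φ.Γ ∧ Φ'.C = Φ.C ∧ Φ'.X = Φ.X ∧ Φ'.Y0 = Φ.Y0 ∧ Φ'.Y1 = Φ.Y1 ∧
    Φ'.A1 = Φ.A1 ∧ Φ'.Δ < Φ.Δ ∧ Φ'.Λ = Φ.Λ

/-- Operation (4): remove an element `y` from `Y₁`. -/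
def Op4 (Φ Φ' : FrameTemplate F) : Prop :=
  ∃ y ∈ Φ.Y1, Φ'.Γ = Φ.Γ ∧ Φ'.C = Φ.C ∧ Φ'.X = Φ.X ∧ Φ'.Y0 = Φ.Y0 ∧
    Φ'.Y1 = Φ.Y1.erase y ∧
    Φ'.A1 = (fun i j => if j = y then 0 else Φ.A1 i j) ∧
    (Φ'.Δ : Set (ℕ → F)) = maskOn Φ'.CY '' ↑Φ.Δ ∧ Φ'.Λ = Φ.Λ

/-- An elementary row operation on the rows indexed by `X`. -/
def ElemRowOp (X : Finset ℕ) (e : (ℕ → F) → (ℕ → F)) : Prop :=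
  (∃ x₁ ∈ X, ∃ x₂ ∈ X, x₁ ≠ x₂ ∧ e = fun v => v ∘ Equiv.swap x₁ x₂) ∨
  (∃ x ∈ X, ∃ c : F, c ≠ 0 ∧ e = fun v i => if i = x then c * v i else v i) ∨
  (∃ x₁ ∈ X, ∃ x₂ ∈ X, x₁ ≠ x₂ ∧
    ∃ c : F, e = fun v i => if i = x₂ then v i + c * v x₁ else v i)

/-- Operation (5): perform an elementary row operation on the `X`-rows of every matrix
respecting `Φ`; this alters `A₁` and performs a change of basis on `Λ`. -/
def Op5 (Φ Φ' : FrameTemplate F) : Prop :=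
  ∃ e, ElemRowOp Φ.X e ∧
    Φ'.Γ = Φ.Γ ∧ Φ'.C = Φ.C ∧ Φ'.X = Φ.X ∧ Φ'.Y0 = Φ.Y0 ∧ Φ'.Y1 = Φ.Y1 ∧
    Φ'.A1 = (fun i j => e (fun i' => Φ.A1 i' j) i) ∧
    Φ'.Δ = Φ.Δ ∧ (Φ'.Λ : Set (ℕ → F)) = e '' ↑Φ.Λ

/-- Operation (6): remove an element `x ∈ X` whose row is zero in every matrix
respecting `Φ`. -/
def Op6 (Φ Φ' : FrameTemplate F) : Prop :=
  ∃ x ∈ Φ.X, (∀ B E Z A', Φ.Respects B E Z A' → ∀ j, A' x j = 0) ∧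
    Φ'.Γ = Φ.Γ ∧ Φ'.C = Φ.C ∧ Φ'.X = Φ.X.erase x ∧ Φ'.Y0 = Φ.Y0 ∧ Φ'.Y1 = Φ.Y1 ∧
    Φ'.A1 = (fun i j => if i = x then 0 else Φ.A1 i j) ∧
    Φ'.Δ = Φ.Δ ∧ (Φ'.Λ : Set (ℕ → F)) = maskOn (Φ.X.erase x) '' ↑Φ.Λ

/-- Operation (7): contract an element `c ∈ C` whose `A₁`-column is a unit column with
its nonzero entry in row `x`, where `λ_x = 0` for all `λ ∈ Λ` or `δ_c = 0` for all
`δ ∈ Δ`; remove `c` from `C` and `x` from `X`. -/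
def Op7 (Φ Φ' : FrameTemplate F) : Prop :=
  ∃ c ∈ Φ.C, ∃ x ∈ Φ.X,
    Φ.A1 x c = 1 ∧ (∀ i, i ≠ x → Φ.A1 i c = 0) ∧
    ((∀ v ∈ Φ.Λ, v x = 0) ∨ (∀ v ∈ Φ.Δ, v c = 0)) ∧
    Φ'.Γ = Φ.Γ ∧ Φ'.C = Φ.C.erase c ∧ Φ'.X = Φ.X.erase x ∧
    Φ'.Y0 = Φ.Y0 ∧ Φ'.Y1 = Φ.Y1 ∧
    Φ'.A1 = (fun i j => if i = x ∨ j = c then 0 else Φ.A1 i j) ∧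
    (Φ'.Λ : Set (ℕ → F)) = maskOn (Φ.X.erase x) '' ↑Φ.Λ ∧
    (Φ'.Δ : Set (ℕ → F)) =
      maskOn Φ'.CY '' ((fun v : ℕ → F => v - v c • Φ.A1 x) '' ↑Φ.Δ)

/-- Operation (8): remove an element `c ∈ C` whose `A₁`-column is zero and with
`δ_c = 0` for all `δ ∈ Δ`. -/
def Op8 (Φ Φ' : FrameTemplate F) : Prop :=
  ∃ c ∈ Φ.C, (∀ i, Φ.A1 i c = 0) ∧ (∀ v ∈ Φ.Δ, v c = 0) ∧
    Φ'.Γ = Φ.Γ ∧ Φ'.C = Φ.C.erase c ∧ Φ'.X = Φ.X ∧ Φ'.Y0 = Φ.Y0 ∧ Φ'.Y1 = Φ.Y1 ∧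
    Φ'.A1 = Φ.A1 ∧ (Φ'.Δ : Set (ℕ → F)) = maskOn Φ'.CY '' ↑Φ.Δ ∧ Φ'.Λ = Φ.Λ

/-- Operation (10): remove an element `y` from `Y₀` (deleting `y` from every matroid
conforming to `Φ`). -/
def Op10 (Φ Φ' : FrameTemplate F) : Prop :=
  ∃ y ∈ Φ.Y0, Φ'.Γ = Φ.Γ ∧ Φ'.C = Φ.C ∧ Φ'.X = Φ.X ∧ Φ'.Y0 = Φ.Y0.erase y ∧
    Φ'.Y1 = Φ.Y1 ∧
    Φ'.A1 = (fun i j => if j = y then 0 else Φ.A1 i j) ∧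
    (Φ'.Δ : Set (ℕ → F)) = maskOn Φ'.CY '' ↑Φ.Δ ∧ Φ'.Λ = Φ.Λ

/-- Operation (11): for `x ∈ X` with `λ_x = 0` for every `λ ∈ Λ` and `y ∈ Y₀` whose
`A₁`-column is (after row operations, which are available as operation (5)) a unit
column with nonzero entry in row `x`, contract `y` from every matroid conforming
to `Φ`. -/
def Op11 (Φ Φ' : FrameTemplate F) : Prop :=
  ∃ y ∈ Φ.Y0, ∃ x ∈ Φ.X,
    (∀ v ∈ Φ.Λ, v x = 0) ∧ Φ.A1 x y = 1 ∧ (∀ i, i ≠ x → Φ.A1 i y = 0) ∧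
    Φ'.Γ = Φ.Γ ∧ Φ'.C = Φ.C ∧ Φ'.X = Φ.X.erase x ∧ Φ'.Y0 = Φ.Y0.erase y ∧
    Φ'.Y1 = Φ.Y1 ∧
    Φ'.A1 = (fun i j => if i = x ∨ j = y then 0 else Φ.A1 i j) ∧
    (Φ'.Λ : Set (ℕ → F)) = maskOn (Φ.X.erase x) '' ↑Φ.Λ ∧
    (Φ'.Δ : Set (ℕ → F)) =
      maskOn Φ'.CY '' ((fun v : ℕ → F => v - v y • Φ.A1 x) '' ↑Φ.Δ)

/-- Operation (12): for `y ∈ Y₀` with `δ_y = 0` for every `δ ∈ Δ`, contract `y` from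
every matroid conforming to `Φ`.  If the `A₁`-column of `y` is zero this just removes
`y`; otherwise (after row operations, available as operation (5)) the column of `y` is a
unit column with nonzero entry in some row `x`, which is removed together with `y`. -/
def Op12 (Φ Φ' : FrameTemplate F) : Prop :=
  ∃ y ∈ Φ.Y0, (∀ v ∈ Φ.Δ, v y = 0) ∧
    (((∀ i, Φ.A1 i y = 0) ∧
      Φ'.Γ = Φ.Γ ∧ Φ'.C = Φ.C ∧ Φ'.X = Φ.X ∧ Φ'.Y0 = Φ.Y0.erase y ∧ Φ'.Y1 = Φ.Y1 ∧
      Φ'.A1 = Φ.A1 ∧ (Φ'.Δ : Set (ℕ → F)) = maskOn Φ'.CY '' ↑Φ.Δ ∧ Φ'.Λ = Φ.Λ) ∨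
    (∃ x ∈ Φ.X, Φ.A1 x y = 1 ∧ (∀ i, i ≠ x → Φ.A1 i y = 0) ∧
      Φ'.Γ = Φ.Γ ∧ Φ'.C = Φ.C ∧ Φ'.X = Φ.X.erase x ∧ Φ'.Y0 = Φ.Y0.erase y ∧
      Φ'.Y1 = Φ.Y1 ∧
      Φ'.A1 = (fun i j => if i = x ∨ j = y then 0 else Φ.A1 i j) ∧
      (Φ'.Λ : Set (ℕ → F)) = maskOn (Φ.X.erase x) '' ↑Φ.Λ ∧
      (Φ'.Δ : Set (ℕ → F)) = maskOn Φ'.CY '' ↑Φ.Δ))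

/-- A single template operation, from Proposition 3.2 ((1)–(8)) and
Definition 3.3 ((10)–(12)). -/
def Step (Φ Φ' : FrameTemplate F) : Prop :=
  Op1 Φ Φ' ∨ Op2 Φ Φ' ∨ Op3 Φ Φ' ∨ Op4 Φ Φ' ∨ Op5 Φ Φ' ∨ Op6 Φ Φ' ∨ Op7 Φ Φ' ∨
    Op8 Φ Φ' ∨ Op10 Φ Φ' ∨ Op11 Φ Φ' ∨ Op12 Φ Φ'

/-- `Φ'` is a template minor of `Φ`: it is obtained from `Φ` by repeatedly performing
the operations (1)-(8) and (10)-(12). -/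
def IsTemplateMinor (Φ' Φ : FrameTemplate F) : Prop :=
  Relation.ReflTransGen Step Φ Φ'

/-- `M` weakly conforms to `Φ`: `M` virtually conforms to some template minor of `Φ`. -/
def WConforms (M : Matroid α) (Φ : FrameTemplate F) : Prop :=
  ∃ Φ'', IsTemplateMinor Φ'' Φ ∧ VConforms M Φ''

/-- The preorder on templates: `Φ ⪯ Φ'` iff every matroid weakly conforming to `Φ`
weakly conforms to `Φ'`, i.e. `𝓜_w(Φ) ⊆ 𝓜_w(Φ')`. -/
def Preceq (Φ Φ' : FrameTemplate F) : Prop :=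
  ∀ (α : Type) (M : Matroid α), WConforms M Φ → WConforms M Φ'

/-- Equivalence of templates: `𝓜_w(Φ) = 𝓜_w(Φ')`. -/
def TEquiv (Φ Φ' : FrameTemplate F) : Prop :=
  ∀ (α : Type) (M : Matroid α), WConforms M Φ ↔ WConforms M Φ'

/-- A binary frame template: a frame template over `GF(2)` with `Γ` trivial. -/
def IsBinaryT (Φ : FrameTemplate (ZMod 2)) : Prop := Φ.Γ = ⊥

end FrameTemplate

namespace FrameTemplate

lemma bot_smul_mem {F : Type} [Field F] (G : AddSubgroup (ℕ → F)) :
    ∀ γ ∈ (⊥ : Subgroup Fˣ), ∀ v ∈ G, (γ : F) • v ∈ G := by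
  intro γ hγ v hv
  rw [Subgroup.mem_bot] at hγ
  subst hγ
  simpa using hv

lemma bot_supp {F : Type} [Field F] (S : Finset ℕ) :
    ∀ v ∈ (⊥ : AddSubgroup (ℕ → F)), ∀ i ∉ S, v i = 0 := by
  intro v hv i _
  rw [AddSubgroup.mem_bot] at hv
  simp [hv]

lemma fullOn_supp {F : Type} [Field F] (S : Finset ℕ) :
    ∀ v ∈ fullOn F S, ∀ i ∉ S, v i = 0 := fun _ hv => hv

/-- The trivial template `Φ₀`: all groups trivial and all sets empty. -/
def Phi0 : FrameTemplate (ZMod 2) where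
  Γ := ⊥
  C := ∅
  X := ∅
  Y0 := ∅
  Y1 := ∅
  disj := by simp
  A1 := fun _ _ => 0
  A1_supp := by intro i j h; exact absurd rfl h
  Δ := ⊥
  Δ_supp := bot_supp _
  Δ_smul := bot_smul_mem _
  Λ := ⊥
  Λ_supp := bot_supp _
  Λ_smul := bot_smul_mem _

/-- The template `Φ_C`: all groups trivial and all sets empty except `|C| = 1` and
`Δ ≅ ℤ/2ℤ`. -/
def PhiC : FrameTemplate (ZMod 2) where
  Γ := ⊥
  C := {0}
  X := ∅
  Y0 := ∅
  Y1 := ∅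
  disj := by simp
  A1 := fun _ _ => 0
  A1_supp := by intro i j h; exact absurd rfl h
  Δ := fullOn (ZMod 2) {0}
  Δ_supp := by simpa using fullOn_supp (F := ZMod 2) {0}
  Δ_smul := bot_smul_mem _
  Λ := ⊥
  Λ_supp := bot_supp _
  Λ_smul := bot_smul_mem _

/-- The template `Φ_X`: all groups trivial and all sets empty except `|X| = 1` and
`Λ ≅ ℤ/2ℤ`. -/
def PhiX : FrameTemplate (ZMod 2) where
  Γ := ⊥
  C := ∅
  X := {0}
  Y0 := ∅
  Y1 := ∅
  disj := by simp
  A1 := fun _ _ => 0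
  A1_supp := by intro i j h; exact absurd rfl h
  Δ := ⊥
  Δ_supp := bot_supp _
  Δ_smul := bot_smul_mem _
  Λ := fullOn (ZMod 2) {0}
  Λ_supp := fullOn_supp _
  Λ_smul := bot_smul_mem _

/-- The template `Φ_{Y₀}`: all groups trivial and all sets empty except `|Y₀| = 1` and
`Δ ≅ ℤ/2ℤ`. -/
def PhiY0 : FrameTemplate (ZMod 2) where
  Γ := ⊥
  C := ∅
  X := ∅
  Y0 := {0}
  Y1 := ∅
  disj := by simp
  A1 := fun _ _ => 0
  A1_supp := by intro i j h; exact absurd rfl h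
  Δ := fullOn (ZMod 2) {0}
  Δ_supp := by simpa using fullOn_supp (F := ZMod 2) {0}
  Δ_smul := bot_smul_mem _
  Λ := ⊥
  Λ_supp := bot_supp _
  Λ_smul := bot_smul_mem _

/-- The template `Φ_{CX}`: `Y₀ = Y₁ = ∅`, `|C| = |X| = 1`, `Δ ≅ Λ ≅ ℤ/2ℤ`, `Γ` trivial,
and `A₁ = [1]`. -/
def PhiCX : FrameTemplate (ZMod 2) where
  Γ := ⊥
  C := {0}
  X := {1}
  Y0 := ∅
  Y1 := ∅
  disj := by simp
  A1 := fun i j => if i = 1 ∧ j = 0 then 1 else 0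
  A1_supp := by
    intro i j h
    by_cases hc : i = 1 ∧ j = 0
    · obtain ⟨hi, hj⟩ := hc
      subst hi; subst hj
      simp
    · simp [hc] at h
  Δ := fullOn (ZMod 2) {0}
  Δ_supp := by simpa using fullOn_supp (F := ZMod 2) {0}
  Δ_smul := bot_smul_mem _
  Λ := fullOn (ZMod 2) {1}
  Λ_supp := fullOn_supp _
  Λ_smul := bot_smul_mem _

/-- The template `Φ_{Y₁}`: all groups trivial, `C = Y₀ = ∅`, `|Y₁| = 3`, `|X| = 2`, and
`A₁ = [[1,0,1],[0,1,1]]` (rows `0, 1`; columns `2, 3, 4`). -/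
def PhiY1 : FrameTemplate (ZMod 2) where
  Γ := ⊥
  C := ∅
  X := {0, 1}
  Y0 := ∅
  Y1 := {2, 3, 4}
  disj := by simp [Finset.disjoint_left]
  A1 := fun i j =>
    if (i = 0 ∧ (j = 2 ∨ j = 4)) ∨ (i = 1 ∧ (j = 3 ∨ j = 4)) then 1 else 0
  A1_supp := by
    intro i j h
    by_cases hc : (i = 0 ∧ (j = 2 ∨ j = 4)) ∨ (i = 1 ∧ (j = 3 ∨ j = 4))
    · constructor
      · rcases hc with ⟨hi, _⟩ | ⟨hi, _⟩ <;> subst hi <;> simp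
      · rcases hc with ⟨_, hj | hj⟩ | ⟨_, hj | hj⟩ <;> subst hj <;> simp
    · simp [hc] at h
  Δ := ⊥
  Δ_supp := bot_supp _
  Δ_smul := bot_smul_mem _
  Λ := ⊥
  Λ_supp := bot_supp _
  Λ_smul := bot_smul_mem _

/-- A trivial template: one that is `⪯ Φ₀`. -/
def IsTrivialT (Φ : FrameTemplate (ZMod 2)) : Prop := Preceq Φ Phi0

variable {F : Type} [Field F]

/-- `Φ` is in standard form, with the witnessing partitions `C = C₀ ∪ C₁` and
`X = X₀ ∪ X₁`: `A₁[X₀, C₀]` is an identity matrix and `A₁[X₁, C]` is a zero matrix. -/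
def StandardFormOn (Φ : FrameTemplate F) (C0 C1 X0 X1 : Finset ℕ) : Prop :=
  Φ.C = C0 ∪ C1 ∧ Disjoint C0 C1 ∧ Φ.X = X0 ∪ X1 ∧ Disjoint X0 X1 ∧
  (∃ g : ℕ → ℕ, Set.BijOn g ↑X0 ↑C0 ∧
    ∀ x ∈ X0, ∀ c ∈ C0, Φ.A1 x c = if g x = c then 1 else 0) ∧
  (∀ x ∈ X1, ∀ c ∈ Φ.C, Φ.A1 x c = 0)

/-- `Φ` is in standard form. -/
def StandardForm (Φ : FrameTemplate F) : Prop :=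
  ∃ C0 C1 X0 X1, StandardFormOn Φ C0 C1 X0 X1

end FrameTemplate


/-- `M₂` is a rank-`(≤ t)` perturbation of `M₁` over `GF(2)`: there are `GF(2)`-matrices
`A₁, A₂` with the same row and column index sets such that `M₁ ≅ M(A₁)`, `M₂ ≅ M(A₂)`,
and `A₁ - A₂` has rank at most `t`. -/
def IsRankLePerturbation {α β : Type*} (t : ℕ) (M₁ : Matroid α) (M₂ : Matroid β) :
    Prop :=
  ∃ (m : ℕ) (Ecols : Finset ℕ) (A₁ A₂ : Fin m → ℕ → ZMod 2) (N₁ N₂ : Matroid ℕ),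
    IsColMatroidOf N₁ Ecols A₁ ∧ IsColMatroidOf N₂ Ecols A₂ ∧
    MIso M₁ N₁ ∧ MIso M₂ N₂ ∧
    Module.finrank (ZMod 2) (Submodule.span (ZMod 2)
      ((fun j : ℕ => fun i : Fin m => A₁ i j - A₂ i j) '' ↑Ecols)) ≤ t

/-- `Q` is (isomorphic to) the cycle matroid `M(K_{r+1})` of the complete graph on
`r + 1` vertices: its ground set is in bijection with the edges of `K_{r+1}`, with
independence given by linear independence of the corresponding columns of the
`GF(2)` vertex-edge incidence matrix. -/
def IsCycleMatroidOfCompleteGraph {γ : Type*} (r : ℕ) (Q : Matroid γ) : Prop :=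
  ∃ f : γ → Sym2 (Fin (r + 1)),
    Set.BijOn f Q.E {p : Sym2 (Fin (r + 1)) | ¬ p.IsDiag} ∧
    ∀ I ⊆ Q.E, (Q.Indep I ↔ LinearIndependent (ZMod 2)
      (fun e : I => fun v : Fin (r + 1) => if v ∈ f (e : γ) then (1 : ZMod 2) else 0))

/-!
`M(K_{r+1})` is simple, has rank `r` and `(r + 1).choose 2` elements. Let `A₁` represent it and
`A₂` a cographic matroid `N` on the same columns, with `rank (A₁ - A₂) ≤ k`. Columns of `A₁` are
distinct, and two of them with the same `A₂`-column differ by one of the `2 ^ k` vectors in the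
column space of `A₁ - A₂`; so `A₂` has at least `(r + 1).choose 2 / 2 ^ k` distinct columns.
One column of each nonzero value gives a simple restriction `N | S` of rank at most `r + k`.

If `N = M*(G)` for a graph `G` with edge set `E`, and `N | S` is simple of rank `s`, then
`|S| ≤ 3 s`: the cut space of `G ／ (E \ S)` has dimension `|S| - s`, is spanned by vertex stars
and has no nonzero member of size at most two (it would be a circuit of `N | S`), and each edge
lies in at most two stars; hence `3 (|S| - s) ≤ 2 |S|`. Together,
`(r + 1).choose 2 ≤ (3 (r + k) + 1) 2 ^ k`, which bounds `r`.
-/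

open Function Submodule Module

lemma _root_.LinearIndepOn.finrank_span_image {ι K V : Type*} [Field K] [AddCommGroup V]
    [Module K V] [FiniteDimensional K V] {v : ι → V} {s : Set ι} (hs : LinearIndepOn K v s) :
    finrank K (span K (v '' s)) = s.ncard := by
  rw [Set.ncard_def, ← toENat_rank_span_set hs, ← finrank_eq_rank]
  simp [finrank]

section Representation

variable {α β F : Type*} [Field F] {M : Matroid α} {A : β → α → F}

lemma IsRepBy.indep_iff (hA : IsRepBy F M A) {I : Set α} (hI : I ⊆ M.E) :
    M.Indep I ↔ LinearIndepOn F (swap A) I :=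
  hA I hI

lemma IsRepBy.isBase_iff (hA : IsRepBy F M A) {B : Set α} (hB : B ⊆ M.E) :
    M.IsBase B ↔ LinearIndepOn F (swap A) B ∧ swap A '' M.E ⊆ span F (swap A '' B) := by
  constructor
  · intro hBase
    refine ⟨(hA.indep_iff hB).mp hBase.indep, ?_⟩
    rintro _ ⟨e, he, rfl⟩
    by_cases heB : e ∈ B
    · exact subset_span (mem_image_of_mem _ heB)
    · have hdep := (hBase.insert_dep ⟨he, heB⟩).not_indep
      rw [hA.indep_iff (insert_subset he hB), linearIndepOn_insert heB] at hdep
      by_contra hnot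
      exact hdep ⟨(hA.indep_iff hB).mp hBase.indep, hnot⟩
  · rintro ⟨hli, hspan⟩
    refine ((hA.indep_iff hB).mpr hli).isBase_of_forall_insert fun e ⟨he, heB⟩ hins => ?_
    rw [hA.indep_iff (insert_subset he hB), linearIndepOn_insert heB] at hins
    exact hins.2 (hspan (mem_image_of_mem _ he))

lemma IsRepBy.dual_indep_iff (hA : IsRepBy F M A) {I : Set α} (hI : I ⊆ M.E) :
    M✶.Indep I ↔ span F (swap A '' (M.E \ I)) = span F (swap A '' M.E) := by
  rw [dual_indep_iff_exists', and_iff_right hI]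
  constructor
  · rintro ⟨B, hB, hIB⟩
    have hBI : B ⊆ M.E \ I := subset_sdiff.mpr ⟨hB.subset_ground, hIB.symm⟩
    refine le_antisymm (span_mono (image_mono sdiff_subset)) (span_le.mpr ?_)
    exact ((hA.isBase_iff hB.subset_ground).mp hB).2.trans (span_mono (image_mono hBI))
  · intro hspan
    obtain ⟨B, hBI, -, hBspan, hli⟩ :=
      exists_linearIndepOn_extension (linearIndepOn_empty F (swap A)) (empty_subset (M.E \ I))
    refine ⟨B, (hA.isBase_iff (hBI.trans sdiff_subset)).mpr ⟨hli, ?_⟩,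
      (subset_sdiff.mp hBI).2.symm⟩
    rw [← span_le, ← hspan, span_le]
    exact hBspan

lemma IsRepBy.finrank_span_le [Finite β] (hA : IsRepBy F M A) {r : ℕ}
    (hr : ∀ I ⊆ M.E, M.Indep I → I.ncard ≤ r) : finrank F (span F (swap A '' M.E)) ≤ r := by
  obtain ⟨B, hBE, -, hBspan, hli⟩ :=
    exists_linearIndepOn_extension (linearIndepOn_empty F (swap A)) (empty_subset M.E)
  calc finrank F (span F (swap A '' M.E)) ≤ finrank F (span F (swap A '' B)) :=
        finrank_mono (span_le.mpr hBspan)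
    _ = B.ncard := hli.finrank_span_image
    _ ≤ r := hr B hBE ((hA.indep_iff hBE).mpr hli)

end Representation

lemma exists_pair_of_hammingNorm_le_two {T R : Type*} [Fintype T] [Zero R] [DecidableEq R]
    {w : T → R} (hw : hammingNorm w ≤ 2) (hw0 : w ≠ 0) : ∃ a b, ∀ e, w e ≠ 0 → e = a ∨ e = b := by
  classical
  obtain ⟨a, ha⟩ : ∃ a, w a ≠ 0 := by
    by_contra! h
    exact hw0 (funext h)
  have : Nonempty T := ⟨a⟩
  obtain ⟨b, hb⟩ := Finset.card_le_one_iff_subset_singleton.mp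
    (show (({e | w e ≠ 0} : Finset T).erase a).card ≤ 1 by
      rw [Finset.card_erase_of_mem (by simpa using ha)]
      exact Nat.sub_le_of_le_add hw)
  refine ⟨a, b, fun e he => or_iff_not_imp_left.mpr fun hea => ?_⟩
  simpa using @hb e (by simp [hea, he])

section RowSpace

variable {α ι K : Type*} [Field K] [Fintype ι]

lemma dotProduct_eq_zero_of_mem_span {u : ι → K} {X : Set (ι → K)}
    (h : ∀ y ∈ X, u ⬝ᵥ y = 0) {y : ι → K} (hy : y ∈ span K X) : u ⬝ᵥ y = 0 :=
  (span_le (p := LinearMap.ker (dotProductBilin K K u))).mpr h hy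

lemma exists_dotProduct_eq_zero_of_notMem_span {X : Set (ι → K)} {x : ι → K}
    (hx : x ∉ span K X) : ∃ u : ι → K, (∀ y ∈ X, u ⬝ᵥ y = 0) ∧ u ⬝ᵥ x ≠ 0 := by
  classical
  obtain ⟨f, hfx, hf⟩ := exists_dual_map_eq_bot_of_notMem hx inferInstance
  refine ⟨(dotProductEquiv K ι).symm f, fun y hy => ?_, ?_⟩
  · rw [← dotProductEquiv_apply_apply, LinearEquiv.apply_symm_apply]
    have hmem : f y ∈ (span K X).map f := mem_map_of_mem (subset_span hy)
    rwa [hf, mem_bot] at hmem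
  · rwa [← dotProductEquiv_apply_apply, LinearEquiv.apply_symm_apply]

lemma linearIndependent_of_apply_diag_ne_zero {J T : Type*} [Fintype J] {v : J → T → K}
    (g : J → T) (hdiag : ∀ j, v j (g j) ≠ 0) (hoff : ∀ j j', j ≠ j' → v j (g j') = 0) :
    LinearIndependent K v := by
  rw [Fintype.linearIndependent_iff]
  intro a ha j
  have hj : ∑ i, a i * v i (g j) = 0 := by simpa using congrFun ha (g j)
  rw [Finset.sum_eq_single j (fun i _ hij => by rw [hoff i j hij, mul_zero])
    (by simp)] at hj
  exact (mul_eq_zero.mp hj).resolve_right (hdiag j)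

def dotRestrict (c : α → ι → K) (S : Set α) : (ι → K) →ₗ[K] (S → K) :=
  LinearMap.pi fun e => (dotProductBilin K K).flip (c e)

@[simp] lemma dotRestrict_apply (c : α → ι → K) (S : Set α) (u : ι → K) (e : S) :
    dotRestrict c S u e = u ⬝ᵥ c e := rfl

lemma mem_ker_dotRestrict {c : α → ι → K} {S : Set α} {u : ι → K} :
    u ∈ LinearMap.ker (dotRestrict c S) ↔ ∀ e ∈ S, u ⬝ᵥ c e = 0 := by
  simp [funext_iff]

/-- If the columns `c` represent a matroid `M` on `E`, this is the row space of the induced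
representation of `M ／ (E \ S)`; for the incidence matrix of a graph `G`, it is the cut space
of `G ／ (E \ S)`. -/
def contractRowSpace (c : α → ι → K) (E : Set α) (S : Finset α) : Submodule K (S → K) :=
  (LinearMap.ker (dotRestrict c (E \ S))).map (dotRestrict c S)

variable {c : α → ι → K} {E : Set α} {S : Finset α}

lemma eq_zero_of_mem_contractRowSpace (hSE : ↑S ⊆ E) {a b : S}
    (hab : span K (c '' (E \ {(a : α), (b : α)})) = span K (c '' E))
    {w : S → K} (hw : w ∈ contractRowSpace c E S) (hwab : ∀ e, w e ≠ 0 → e = a ∨ e = b) :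
    w = 0 := by
  obtain ⟨u, hu, rfl⟩ := mem_map.mp hw
  rw [mem_ker_dotRestrict] at hu
  have hvanish : ∀ y ∈ c '' (E \ {(a : α), (b : α)}), u ⬝ᵥ y = 0 := by
    rintro _ ⟨x, ⟨hxE, hxab⟩, rfl⟩
    by_cases hxS : x ∈ S
    · by_contra hne
      rcases hwab ⟨x, hxS⟩ hne with h | h <;> simp [← h] at hxab
    · exact hu x ⟨hxE, hxS⟩
  ext e
  refine dotProduct_eq_zero_of_mem_span hvanish ?_
  rw [hab]
  exact subset_span (mem_image_of_mem c (hSE e.2))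

lemma three_le_hammingNorm_of_mem_contractRowSpace [DecidableEq K] (hSE : ↑S ⊆ E)
    (hpair : ∀ a ∈ S, ∀ b ∈ S, span K (c '' (E \ {a, b})) = span K (c '' E))
    {w : S → K} (hw : w ∈ contractRowSpace c E S) (hw0 : w ≠ 0) : 3 ≤ hammingNorm w := by
  by_contra! hlt
  obtain ⟨a, b, hab⟩ := exists_pair_of_hammingNorm_le_two (Nat.le_of_lt_succ hlt) hw0
  exact hw0 (eq_zero_of_mem_contractRowSpace hSE (hpair a a.2 b b.2) hw hab)

lemma card_sdiff_le_finrank_contractRowSpace [DecidableEq α] (hSE : ↑S ⊆ E) {I : Finset α}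
    (hIS : I ⊆ S) (hsep : ∀ e ∈ S \ I, c e ∉ span K (c '' (E \ ↑(insert e I)))) :
    (S \ I).card ≤ finrank K (contractRowSpace c E S) := by
  choose u hu0 hu1 using fun e (he : e ∈ S \ I) =>
    exists_dotProduct_eq_zero_of_notMem_span (hsep e he)
  have hu0' : ∀ e (he : e ∈ S \ I), ∀ x ∈ E, x ∉ insert e I → u e he ⬝ᵥ c x = 0 :=
    fun e he x hxE hx => hu0 e he _ ⟨x, ⟨hxE, hx⟩, rfl⟩
  have hmem : ∀ e (he : e ∈ S \ I), dotRestrict c S (u e he) ∈ contractRowSpace c E S := by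
    refine fun e he => mem_map_of_mem (mem_ker_dotRestrict.mpr fun x ⟨hxE, hxS⟩ => ?_)
    exact hu0' e he x hxE fun hx => hxS (Finset.insert_subset (Finset.mem_sdiff.mp he).1 hIS hx)
  have hli : LinearIndependent K
      (fun e : ↥(S \ I) => (⟨_, hmem e e.2⟩ : contractRowSpace c E S)) := by
    refine LinearIndependent.of_comp (contractRowSpace c E S).subtype
      (linearIndependent_of_apply_diag_ne_zero (fun e => ⟨e, (Finset.mem_sdiff.mp e.2).1⟩)
        (fun e => hu1 e e.2) fun e e' hee' => hu0' e e.2 e' (hSE (Finset.mem_sdiff.mp e'.2).1) ?_)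
    simp [(Finset.mem_sdiff.mp e'.2).2, hee'.symm]
  simpa using hli.fintype_card_le_finrank

lemma exists_card_le_card_add_finrank_contractRowSpace [DecidableEq α] (hSE : ↑S ⊆ E) :
    ∃ I ⊆ S, span K (c '' (E \ I)) = span K (c '' E) ∧
      S.card ≤ I.card + finrank K (contractRowSpace c E S) := by
  obtain ⟨I, hI, hImax⟩ := Finset.exists_maximal
    (s := S.powerset.filter fun I : Finset α => span K (c '' (E \ I)) = span K (c '' E))
    ⟨∅, by simp⟩
  simp only [Finset.mem_filter, Finset.mem_powerset] at hI
  obtain ⟨hIS, hIspan⟩ := hI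
  have hsep : ∀ e ∈ S \ I, c e ∉ span K (c '' (E \ ↑(insert e I))) := by
    intro e he hmem
    have hspan : span K (c '' (E \ ↑(insert e I))) = span K (c '' E) := by
      refine le_antisymm (span_mono (image_mono sdiff_subset)) ?_
      rw [← hIspan, span_le]
      rintro _ ⟨x, ⟨hxE, hxI⟩, rfl⟩
      by_cases hxe : x = e
      · exact hxe ▸ hmem
      · exact subset_span ⟨x, ⟨hxE, by simp [hxe, hxI]⟩, rfl⟩
    have hle := hImax (Finset.mem_filter.mpr ⟨Finset.mem_powerset.mpr
      (Finset.insert_subset (Finset.mem_sdiff.mp he).1 hIS), hspan⟩) (Finset.subset_insert e I)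
    exact (Finset.mem_sdiff.mp he).2 (hle (Finset.mem_insert_self e I))
  refine ⟨I, hIS, hIspan, ?_⟩
  have := card_sdiff_le_finrank_contractRowSpace hSE hIS hsep
  have := Finset.card_sdiff_add_card_eq_card hIS
  omega

end RowSpace

section Binary

variable {α ι : Type*} [Fintype ι]

lemma linearIndepOn_pair_zmod_two {V : Type*} [AddCommGroup V] [Module (ZMod 2) V]
    {f : α → V} {a b : α} (ha : f a ≠ 0) (hb : f b ≠ 0) (hab : f a = f b → a = b) :
    LinearIndepOn (ZMod 2) f {a, b} := by
  by_cases h : a = b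
  · subst h
    simpa using ha
  · rw [linearIndepOn_pair_iff f h ha]
    intro t
    rcases (by decide : ∀ t : ZMod 2, t = 0 ∨ t = 1) t with rfl | rfl
    · rw [zero_smul]
      exact hb.symm
    · rw [one_smul]
      exact mt hab h

lemma dotProduct_eq_sum_support_zmod_two (x v : ι → ZMod 2) :
    x ⬝ᵥ v = ∑ i ∈ Finset.univ.filter (v · ≠ 0), x i := by
  rw [dotProduct, Finset.sum_filter]
  refine Finset.sum_congr rfl fun i _ => ?_
  rcases (by decide : ∀ a : ZMod 2, a = 0 ∨ a = 1) (v i) with h | h <;> simp [h]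

/-- Vectors of weight at most two over `GF(2)` are the edges of a graph on `ι` together with an
extra vertex (the other end of the edges of weight one). The vectors orthogonal to all of them
are the sums of connected components avoiding the extra vertex, so they are spanned by the
indicators of these components, which have disjoint supports. -/
lemma exists_pairwiseDisjoint_support_spanning_ker {c : α → ι → ZMod 2} {X : Set α}
    (hc : ∀ e ∈ X, hammingNorm (c e) ≤ 2) :
    ∃ B : Finset (ι → ZMod 2), ↑B ⊆ (LinearMap.ker (dotRestrict c X) : Set (ι → ZMod 2)) ∧
      LinearMap.ker (dotRestrict c X) ≤ span (ZMod 2) ↑B ∧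
      (↑B : Set (ι → ZMod 2)).PairwiseDisjoint support := by
  classical
  set U := LinearMap.ker (dotRestrict c X)
  let s : Setoid ι := ⟨fun i j => ∀ u ∈ U, u i = u j,
    ⟨fun _ _ _ => rfl, fun h u hu => (h u hu).symm, fun h₁ h₂ u hu => (h₁ u hu).trans (h₂ u hu)⟩⟩
  have : Fintype (Quotient s) := Fintype.ofFinite _
  let χ : Quotient s → ι → ZMod 2 := fun q j => if Quotient.mk s j = q then 1 else 0
  have hχ : ∀ q, (∃ u ∈ U, u q.out ≠ 0) → χ q ∈ U := by
    rintro q ⟨u₀, hu₀, hu₀q⟩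
    refine mem_ker_dotRestrict.mpr fun e he => ?_
    have hsum : ∀ u ∈ U, ∑ i ∈ Finset.univ.filter (c e · ≠ 0), u i = 0 := fun u hu => by
      rw [← dotProduct_eq_sum_support_zmod_two]; exact mem_ker_dotRestrict.mp hu e he
    rw [dotProduct_eq_sum_support_zmod_two]
    have hcard : (Finset.univ.filter (c e · ≠ 0)).card ≤ 2 := hc e he
    generalize Finset.univ.filter (c e · ≠ 0) = T at hsum hcard ⊢
    interval_cases h : T.card
    · simp [Finset.card_eq_zero.mp h]
    · obtain ⟨j, rfl⟩ := Finset.card_eq_one.mp h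
      have hj : Quotient.mk s j ≠ q := by
        rintro rfl
        have hj : ∀ u ∈ U, u (Quotient.mk s j).out = u j := Quotient.mk_out j
        exact hu₀q ((hj u₀ hu₀).trans (by simpa using hsum u₀ hu₀))
      simp only [Finset.sum_singleton, χ, if_neg hj]
    · obtain ⟨j, l, hjl, rfl⟩ := Finset.card_eq_two.mp h
      have hjl' : Quotient.mk s j = Quotient.mk s l := Quotient.sound fun u hu => by
        simpa [Finset.sum_pair hjl, (by decide : ∀ a b : ZMod 2, a + b = 0 ↔ a = b)]
          using hsum u hu
      simp only [Finset.sum_pair hjl, χ, hjl']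
      split_ifs <;> decide
  refine ⟨(Finset.univ.filter fun q => χ q ∈ U).image χ, ?_, ?_, ?_⟩
  · intro x hx
    obtain ⟨q, hq, rfl⟩ := Finset.mem_image.mp hx
    exact (Finset.mem_filter.mp hq).2
  · intro u hu
    have hu_eq : u = ∑ q ∈ Finset.univ.filter fun q => χ q ∈ U, u q.out • χ q := by
      ext j
      have hj : ∀ u ∈ U, u (Quotient.mk s j).out = u j := Quotient.mk_out j
      rw [Finset.sum_apply, Finset.sum_congr rfl fun q _ => show (u q.out • χ q) j =
        if Quotient.mk s j = q then u q.out else 0 by simp [χ], Finset.sum_ite_eq]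
      split_ifs with h
      · exact (hj u hu).symm
      · rw [Finset.mem_filter] at h
        by_contra hne
        exact h ⟨Finset.mem_univ _, hχ _ ⟨u, hu, fun h0 => hne ((hj u hu).symm.trans h0)⟩⟩
    rw [hu_eq]
    exact sum_mem fun q hq => smul_mem _ _ (subset_span (Finset.mem_image_of_mem χ hq))
  · intro x hx y hy hxy
    obtain ⟨q, -, rfl⟩ := Finset.mem_image.mp hx
    obtain ⟨q', -, rfl⟩ := Finset.mem_image.mp hy
    refine Set.disjoint_left.mpr fun j hjq hjq' => hxy ?_
    simp only [mem_support, χ, ne_eq, ite_eq_right_iff, not_forall] at hjq hjq'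
    rw [← hjq.1, ← hjq'.1]

lemma card_filter_dotProduct_ne_zero_le {K : Type*} [Semiring K] [DecidableEq K]
    {B : Finset (ι → K)} (hB : (↑B : Set (ι → K)).PairwiseDisjoint support) (v : ι → K) :
    (B.filter (· ⬝ᵥ v ≠ 0)).card ≤ hammingNorm v := by
  refine Finset.card_le_card_of_forall_subsingleton (fun x i => x i ≠ 0) (fun x hx => ?_)
    fun i _ x hx y hy => ?_
  · obtain ⟨i, -, hi⟩ := Finset.exists_ne_zero_of_sum_ne_zero (Finset.mem_filter.mp hx).2
    exact ⟨i, by simp [right_ne_zero_of_mul hi], left_ne_zero_of_mul hi⟩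
  · exact hB.elim (Finset.mem_filter.mp hx.1).1 (Finset.mem_filter.mp hy.1).1
      (Set.not_disjoint_iff.mpr ⟨i, hx.2, hy.2⟩)

lemma three_mul_finrank_contractRowSpace_le {c : α → ι → ZMod 2} {E : Set α} {S : Finset α}
    (hSE : ↑S ⊆ E) (hc : ∀ e ∈ E, hammingNorm (c e) ≤ 2)
    (hmin : ∀ w ∈ contractRowSpace c E S, w ≠ 0 → 3 ≤ hammingNorm w) :
    3 * finrank (ZMod 2) (contractRowSpace c E S) ≤ 2 * S.card := by
  obtain ⟨B, hBU, hUB, hB⟩ :=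
    exists_pairwiseDisjoint_support_spanning_ker (X := E \ S) fun e he => hc e he.1
  set ψ := dotRestrict c S
  set A := B.filter (ψ · ≠ 0)
  have hrank : finrank (ZMod 2) (contractRowSpace c E S) ≤ A.card := by
    have hle : contractRowSpace c E S ≤ span (ZMod 2) ↑(A.image ψ) := by
      refine (map_mono hUB).trans ?_
      rw [map_span, span_le]
      rintro _ ⟨x, hx, rfl⟩
      by_cases hψx : ψ x = 0
      · rw [hψx]
        exact zero_mem _
      · exact subset_span (Finset.mem_image_of_mem ψ (Finset.mem_filter.mpr ⟨hx, hψx⟩))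
    exact (finrank_mono hle).trans ((finrank_span_finset_le_card _).trans Finset.card_image_le)
  have hcount : A.card * 3 ≤ (Finset.univ : Finset S).card * 2 := by
    refine Finset.card_mul_le_card_mul (fun x (e : S) => ψ x e ≠ 0) (fun x hx => ?_) fun e _ => ?_
    · exact hmin (ψ x) (mem_map_of_mem (hBU (Finset.mem_filter.mp hx).1))
        (Finset.mem_filter.mp hx).2
    · refine le_trans (Finset.card_le_card fun x hx => ?_)
        ((card_filter_dotProduct_ne_zero_le hB (c e)).trans (hc e (hSE e.2)))
      simp only [Finset.mem_bipartiteBelow, Finset.mem_filter, A] at hx ⊢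
      exact ⟨hx.1.1, hx.2⟩
  rw [Finset.card_univ, Fintype.card_coe] at hcount
  omega

end Binary

section Cographic

variable {α : Type*} {N : Matroid α}

theorem IsCographic.card_le_three_mul (hN : IsCographic N) {S : Finset α} (hSE : ↑S ⊆ N.E)
    (hpair : ∀ a ∈ S, ∀ b ∈ S, N.Indep {a, b}) {s : ℕ}
    (hrk : ∀ I ⊆ S, N.Indep ↑I → I.card ≤ s) : S.card ≤ 3 * s := by
  classical
  obtain ⟨p, G, hG, hwt⟩ := hN
  have hindep : ∀ I ⊆ N.E, N.Indep I ↔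
      span (ZMod 2) (swap G '' (N.E \ I)) = span (ZMod 2) (swap G '' N.E) := fun I hI => by
    simpa using hG.dual_indep_iff (I := I) hI
  have hc : ∀ e ∈ N.E, hammingNorm (swap G e) ≤ 2 := fun e he => by
    simpa [hammingNorm, Set.ncard_eq_toFinset_card'] using hwt e he
  obtain ⟨I, hIS, hIspan, hcard⟩ :=
    exists_card_le_card_add_finrank_contractRowSpace (c := swap G) hSE
  have hI : I.card ≤ s := hrk I hIS ((hindep I ((Finset.coe_subset.mpr hIS).trans hSE)).mpr hIspan)
  have hdeg := three_mul_finrank_contractRowSpace_le hSE hc fun w hw hw0 =>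
    three_le_hammingNorm_of_mem_contractRowSpace hSE (fun a ha b hb =>
      (hindep _ (pair_subset (hSE ha) (hSE hb))).mp (hpair a ha b hb)) hw hw0
  omega

theorem IsCographic.ncard_image_sdiff_zero_le {β : Type*} [Fintype β] (hN : IsCographic N)
    {A : β → α → ZMod 2} (hA : IsRepBy (ZMod 2) N A) :
    (swap A '' N.E \ {0}).ncard ≤ 3 * finrank (ZMod 2) (span (ZMod 2) (swap A '' N.E)) := by
  rcases N.E.eq_empty_or_nonempty with hE | ⟨e₀, -⟩
  · simp [hE]
  have : Nonempty α := ⟨e₀⟩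
  set X := swap A '' N.E \ {0}
  set g := invFunOn (swap A) N.E
  have hgE : ∀ x ∈ X, g x ∈ N.E := fun x hx => invFunOn_mem hx.1
  have hAg : ∀ x ∈ X, swap A (g x) = x := fun x hx => invFunOn_eq hx.1
  set S := ((toFinite X).image g).toFinset
  have hSX : S.card = X.ncard := by
    rw [← ncard_coe_finset, Finite.coe_toFinset,
      InjOn.ncard_image fun x hx y hy h => (hAg x hx).symm.trans ((congrArg _ h).trans (hAg y hy))]
  have hSE : ↑S ⊆ N.E := by
    rw [Finite.coe_toFinset]
    rintro _ ⟨x, hx, rfl⟩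
    exact hgE x hx
  rw [← hSX]
  refine hN.card_le_three_mul hSE (fun a ha b hb => ?_) fun I hIS hI => ?_
  · rw [Finite.mem_toFinset] at ha hb
    obtain ⟨x, hx, rfl⟩ := ha
    obtain ⟨y, hy, rfl⟩ := hb
    rw [hA.indep_iff (pair_subset (hgE x hx) (hgE y hy))]
    refine linearIndepOn_pair_zmod_two ?_ ?_ fun h => ?_
    · exact (hAg x hx).symm ▸ hx.2
    · exact (hAg y hy).symm ▸ hy.2
    · exact congrArg g ((hAg x hx).symm.trans (h.trans (hAg y hy)))
  · have hIE : (↑I : Set α) ⊆ N.E := (Finset.coe_subset.mpr hIS).trans hSE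
    rw [← ncard_coe_finset, ← ((hA.indep_iff hIE).mp hI).finrank_span_image]
    exact finrank_mono (span_mono (image_mono hIE))

end Cographic

section CompleteGraph

variable {V : Type*} [DecidableEq V]

def sym2Incidence (p : Sym2 V) : V → ZMod 2 := fun v => if v ∈ p then 1 else 0

lemma sym2Incidence_injective : Injective (sym2Incidence (V := V)) := by
  intro p q h
  ext v
  have hv := congrFun h v
  by_cases hp : v ∈ p <;> by_cases hq : v ∈ q <;> simp_all [sym2Incidence]

lemma sym2Incidence_ne_zero (p : Sym2 V) : sym2Incidence p ≠ 0 := fun h =>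
  absurd (Sym2.out_fst_mem p) (by simpa [sym2Incidence] using congrFun h p.out.1)

lemma one_dotProduct_sym2Incidence [Fintype V] {p : Sym2 V} (hp : ¬ p.IsDiag) :
    1 ⬝ᵥ sym2Incidence p = 0 := by
  induction p using Sym2.ind with
  | _ a b =>
    have hab : a ≠ b := fun h => hp (by simp [h])
    rw [one_dotProduct]
    simp only [sym2Incidence, Sym2.mem_iff, Finset.sum_boole]
    rw [show Finset.univ.filter (fun v => v = a ∨ v = b) = {a, b} by ext; simp,
      Finset.card_pair hab]
    rfl

variable {γ : Type*} {r : ℕ} {Q : Matroid γ}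

lemma IsCycleMatroidOfCompleteGraph.ncard_ground (hQ : IsCycleMatroidOfCompleteGraph r Q) :
    Q.E.ncard = (r + 1).choose 2 := by
  obtain ⟨f, hf, -⟩ := hQ
  rw [hf.ncard_eq, ← Nat.card_coe_set_eq, Nat.card_eq_fintype_card]
  exact (Sym2.card_subtype_not_diag (α := Fin (r + 1))).trans (by simp)

lemma IsCycleMatroidOfCompleteGraph.indep_pair (hQ : IsCycleMatroidOfCompleteGraph r Q)
    {a b : γ} (ha : a ∈ Q.E) (hb : b ∈ Q.E) : Q.Indep {a, b} := by
  obtain ⟨f, hf, hind⟩ := hQ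
  refine (hind _ (pair_subset ha hb)).mpr (linearIndepOn_pair_zmod_two (f := sym2Incidence ∘ f)
    (sym2Incidence_ne_zero _) (sym2Incidence_ne_zero _) fun h => ?_)
  exact hf.injOn ha hb (sym2Incidence_injective h)

lemma IsCycleMatroidOfCompleteGraph.ncard_le (hQ : IsCycleMatroidOfCompleteGraph r Q)
    {I : Set γ} (hIE : I ⊆ Q.E) (hI : Q.Indep I) : I.ncard ≤ r := by
  obtain ⟨f, hf, hind⟩ := hQ
  let W := LinearMap.ker (dotProductBilin (ZMod 2) (ZMod 2) (1 : Fin (r + 1) → ZMod 2))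
  have hW : finrank (ZMod 2) W ≤ r := by
    have hWtop : W ≠ ⊤ := fun h => by
      have h0 : Pi.single 0 1 ∈ W := h ▸ mem_top
      simp [W] at h0
    simpa using finrank_lt hWtop
  have hli : LinearIndepOn (ZMod 2) (sym2Incidence ∘ f) I := (hind I hIE).mp hI
  rw [← hli.finrank_span_image]
  refine (Submodule.finrank_mono (span_le.mpr ?_)).trans hW
  rintro _ ⟨e, he, rfl⟩
  exact one_dotProduct_sym2Incidence (hf.mapsTo (hIE he))

end CompleteGraph

section Perturbation

lemma IsColMatroidOf.isRepBy {β : Type*} {F : Type} [Field F] {N : Matroid ℕ} {E : Finset ℕ}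
    {A : β → ℕ → F} (h : IsColMatroidOf N E A) : IsRepBy F N A := fun I hI => by
  rw [h.2 I, and_iff_right (hI.trans h.1.subset)]

variable {α γ β F : Type*} [Field F]

lemma IsRepBy.comp_of_bijOn {M : Matroid α} {N : Matroid γ} {A : β → γ → F}
    (hA : IsRepBy F N A) {f : α → γ} (hf : BijOn f M.E N.E)
    (hind : ∀ I ⊆ M.E, M.Indep I ↔ N.Indep (f '' I)) : IsRepBy F M (fun b x => A b (f x)) :=
  fun I hI => by
    rw [hind I hI, hA.indep_iff ((image_mono hI).trans hf.image_eq.subset)]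
    exact ⟨fun h => h.comp_of_image (hf.injOn.mono hI),
      fun h => LinearIndepOn.image_of_comp f (swap A) h⟩

lemma IsRepBy.injOn {M : Matroid α} {A : β → α → F} (hA : IsRepBy F M A)
    (hpair : ∀ a ∈ M.E, ∀ b ∈ M.E, M.Indep {a, b}) : InjOn (swap A) M.E := fun a ha b hb h =>
  ((hA.indep_iff (pair_subset ha hb)).mp (hpair a ha b hb)).injOn (mem_insert a _)
    (mem_insert_of_mem a rfl) h

lemma card_le_pow_finrank_mul_card_image {K V : Type*} [Field K] [Fintype K] [AddCommGroup V]
    [Module K V] [FiniteDimensional K V] [DecidableEq V] {f g : α → V} {s : Finset α}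
    (hf : InjOn f s) :
    s.card ≤ Fintype.card K ^ finrank K (span K ((f - g) '' s)) * (s.image g).card := by
  have : Finite V := Module.finite_of_finite K
  -- `f - g` embeds each fibre of `g` into the span
  refine Finset.card_le_mul_card_image s _ fun v _ => ?_
  rw [← Nat.card_eq_fintype_card, ← Module.natCard_eq_pow_finrank, ← ncard_coe_finset]
  refine (ncard_le_ncard_of_injOn (f - g) (t := (span K ((f - g) '' s) : Set V))
    (fun a ha => subset_span (mem_image_of_mem _ (Finset.mem_filter.mp ha).1))
    fun a ha b hb h => ?_).trans_eq (Nat.card_coe_set_eq _).symm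
  have ha' := Finset.mem_filter.mp ha
  have hb' := Finset.mem_filter.mp hb
  refine hf ha'.1 hb'.1 ?_
  simpa [ha'.2, hb'.2] using h

lemma card_le_of_rank_le_perturbation {ι : Type*} [Fintype ι] {c₁ c₂ : α → ι → ZMod 2}
    {E : Finset α} {r k : ℕ} (hinj : InjOn c₁ E)
    (hrank₁ : finrank (ZMod 2) (span (ZMod 2) (c₁ '' E)) ≤ r)
    (hrank : finrank (ZMod 2) (span (ZMod 2) ((c₁ - c₂) '' E)) ≤ k)
    (hsimple : (c₂ '' E \ {0}).ncard ≤ 3 * finrank (ZMod 2) (span (ZMod 2) (c₂ '' E))) :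
    E.card ≤ (3 * (r + k) + 1) * 2 ^ k := by
  have hrank₂ : finrank (ZMod 2) (span (ZMod 2) (c₂ '' E)) ≤ r + k := by
    have hle : span (ZMod 2) (c₂ '' E) ≤
        span (ZMod 2) (c₁ '' E) ⊔ span (ZMod 2) ((c₁ - c₂) '' E) := by
      rw [span_le]
      rintro _ ⟨e, he, rfl⟩
      rw [show c₂ e = c₁ e - (c₁ - c₂) e by simp]
      exact sub_mem (mem_sup_left (subset_span ⟨e, he, rfl⟩))
        (mem_sup_right (subset_span ⟨e, he, rfl⟩))
    exact (Submodule.finrank_mono hle).trans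
      ((finrank_add_le_finrank_add_finrank _ _).trans (add_le_add hrank₁ hrank))
  have himage : (E.image c₂).card ≤ (c₂ '' E \ {0}).ncard + 1 := by
    rw [← ncard_coe_finset, Finset.coe_image, ← ncard_singleton (0 : ι → ZMod 2)]
    exact ncard_le_ncard_sdiff_add_ncard _ _ (finite_singleton 0)
  calc E.card ≤ 2 ^ finrank (ZMod 2) (span (ZMod 2) ((c₁ - c₂) '' E)) * (E.image c₂).card := by
        simpa using card_le_pow_finrank_mul_card_image (K := ZMod 2) (g := c₂) hinj
    _ ≤ 2 ^ k * (3 * (r + k) + 1) := by gcongr <;> omega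
    _ = (3 * (r + k) + 1) * 2 ^ k := mul_comm _ _

theorem IsRankLePerturbation.choose_two_le {r k : ℕ} {Q N : Matroid ℕ}
    (h : IsRankLePerturbation k Q N) (hQ : IsCycleMatroidOfCompleteGraph r Q)
    (hN : IsCographic N) : (r + 1).choose 2 ≤ (3 * (r + k) + 1) * 2 ^ k := by
  obtain ⟨m, E, A₁, A₂, N₁, N₂, hN₁, hN₂, ⟨f₁, hf₁, hind₁⟩, ⟨f₂, hf₂, hind₂⟩, hk⟩ := h
  have hQrep := hN₁.isRepBy.comp_of_bijOn hf₁ hind₁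
  have hNrep := hN₂.isRepBy.comp_of_bijOn hf₂ hind₂
  rw [hN₁.1] at hf₁
  rw [hN₂.1] at hf₂
  have himage₁ : swap (fun b x => A₁ b (f₁ x)) '' Q.E = swap A₁ '' E := by
    rw [← hf₁.image_eq, image_image]
  have himage₂ : swap (fun b x => A₂ b (f₂ x)) '' N.E = swap A₂ '' E := by
    rw [← hf₂.image_eq, image_image]
  have hinj : InjOn (swap A₁) E :=
    hf₁.image_eq ▸ (hQrep.injOn fun a ha b hb => hQ.indep_pair ha hb).image_of_comp
  rw [← hQ.ncard_ground, hf₁.ncard_eq, ncard_coe_finset]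
  exact card_le_of_rank_le_perturbation hinj
    (himage₁ ▸ hQrep.finrank_span_le fun I hIE hI => hQ.ncard_le hIE hI) hk
    (himage₂ ▸ hN.ncard_image_sdiff_zero_le hNrep)

end Perturbation

lemma lt_of_choose_two_le {r k : ℕ} (h : (r + 1).choose 2 ≤ (3 * (r + k) + 1) * 2 ^ k) :
    r < 6 * 2 ^ k + 6 * k + 2 := by
  have hchoose : (r + 1).choose 2 * 2 = (r + 1) * r := by
    simpa using (Nat.add_one_mul_choose_eq r 1).symm
  have ht : 1 ≤ 2 ^ k := Nat.one_le_two_pow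
  by_contra! hr
  nlinarith

theorem finitely_many_complete_graphs_perturbation_of_cographic_general (k : ℕ) :
    {r : ℕ | ∃ Q N : Matroid ℕ, IsCycleMatroidOfCompleteGraph r Q ∧ IsCographic N ∧
      IsRankLePerturbation k Q N}.Finite :=
  (finite_Iio (6 * 2 ^ k + 6 * k + 2)).subset fun _ ⟨_, _, hQ, hN, h⟩ =>
    lt_of_choose_two_le (h.choose_two_le hQ hN)

/-- For every positive integer `k`, there are at most finitely many `r`
such that `M(K_{r+1})` is a rank-`(≤ k)` perturbation of a cographic matroid. -/
theorem finitely_many_complete_graphs_perturbation_of_cographic (k : ℕ) (hk : 0 < k) :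
    {r : ℕ | ∃ Q N : Matroid ℕ, IsCycleMatroidOfCompleteGraph r Q ∧ IsCographic N ∧
      IsRankLePerturbation k Q N}.Finite :=
  finitely_many_complete_graphs_perturbation_of_cographic_general k

end TemplatePaper
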